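/- Let t > 0, γ > 0, r > 0, p₁ < 1 with p₁ ≠ 0, λ > 0 and c̄ > 0. Let W_t be a Gaussian random variable with mean 0 and variance t, set Z := exp(−(r + γ²/2)t − γ W_t) and define the optimal consumption c* := max((λZ)^(1/(p₁−1)), c̄). Then, with a := c̄^(p₁−1)/λ, the expected power utility of optimal consumption satisfies E[(c*)^(p₁)/p₁] = (λ^(p₁/(p₁−1))/p₁) · ξ(t, 0, 1, p₁/(p₁−1), 0, a) + (c̄^(p₁)/p₁) · ξ(t, 0, 1, 0, a, +∞). -/

import Mathlib

open MeasureTheory ProbabilityTheory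

open scoped ENNReal

/-- Cumulative distribution function of the standard normal distribution. -/
noncomputable def Phi (x : ℝ) : ℝ := ((gaussianReal 0 1) (Set.Iic x)).toReal

/-- `Φ(d̄(x) + kγ√(s − t))`, where `d̄(x) = (ln(z/x) − (r + γ²/2)(s − t)) / (γ √(s − t))`
for `x ∈ (0, ∞)`, with the conventions `Φ(d̄(0) + u) = 1` and `Φ(d̄(∞) + u) = 0`. -/
noncomputable def PhiDbar (γ r s t z k : ℝ) (x : ℝ≥0∞) : ℝ :=
  if x = 0 then 1
  else if x = ⊤ then 0
  else Phi ((Real.log (z / x.toReal) - (r + γ ^ 2 / 2) * (s - t)) / (γ * Real.sqrt (s - t))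
      + k * γ * Real.sqrt (s - t))

/-- `ξ(s, t, z, k, a, b; γ, r)`. -/
noncomputable def xi (γ r s t z k : ℝ) (a b : ℝ≥0∞) : ℝ :=
  z ^ k * Real.exp (-k * (r + γ ^ 2 / 2) * (s - t) + k ^ 2 * γ ^ 2 / 2 * (s - t)) *
    (PhiDbar γ r s t z k a - PhiDbar γ r s t z k b) * (if a < b then 1 else 0)

/-- `h(t₁, t₂) = exp((μ_F − σ_F²/2 − σ_F r/γ − σ_F γ/2)(t₂ − t₁))`. -/
noncomputable def hF (γ r μF σF t₁ t₂ : ℝ) : ℝ :=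
  Real.exp ((μF - σF ^ 2 / 2 - σF * r / γ - σF * γ / 2) * (t₂ - t₁))

/-! Since `p₁ < 1`, the map `y ↦ y ^ (1 / (p₁ - 1))` is decreasing, so the floor `c̄` binds exactly
when `λZ > c̄ ^ (p₁ - 1)`, i.e. when `W_t` falls below a threshold `u`. Above `u` the utility is
`λ ^ k Z ^ k` with `k = p₁ / (p₁ - 1)`, an exponential of `W_t`, whose Gaussian integral over the
half-line `[u, ∞)` is computed by exponential tilting, which shifts the mean of `W_t` by `-kγt`.
Below `u` the utility is constant. Both pieces are thus Gaussian half-line probabilities, namely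
`1 - Φ(d̄(a) + kγ√t)` and `Φ(d̄(a))`. -/

open scoped NNReal

open Set

section Gaussian

variable {v : ℝ≥0}

lemma gaussianReal_eq_map_standard (m : ℝ) :
    gaussianReal m v = (gaussianReal 0 1).map (fun x => √v * x + m) := by
  have h := gaussianReal_add_const (gaussianReal_const_mul (HasLaw.id (μ := gaussianReal 0 1)) √v) m
  refine Eq.trans ?_ h.map_eq.symm
  congr 1
  · simp
  · ext
    simp [Real.sq_sqrt v.coe_nonneg]

lemma gaussianReal_real_Iic (hv : v ≠ 0) (m u : ℝ) :
    (gaussianReal m v).real (Iic u) = Phi ((u - m) / √v) := by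
  have hσ : 0 < √(v : ℝ) := Real.sqrt_pos.2 (NNReal.coe_pos.2 (pos_iff_ne_zero.2 hv))
  have hpre : (fun x => √v * x + m) ⁻¹' Iic u = Iic ((u - m) / √v) := by
    ext x
    simp only [mem_preimage, mem_Iic, le_div_iff₀ hσ]
    constructor <;> intro h <;> linarith
  rw [gaussianReal_eq_map_standard, map_measureReal_apply (by fun_prop) measurableSet_Iic, hpre]
  rfl

lemma gaussianReal_real_Iio (hv : v ≠ 0) (m u : ℝ) :
    (gaussianReal m v).real (Iio u) = Phi ((u - m) / √v) := by
  have := nullSingletonClass_gaussianReal (μ := m) hv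
  rw [measureReal_congr Iio_ae_eq_Iic, gaussianReal_real_Iic hv]

lemma gaussianReal_real_Ici (hv : v ≠ 0) (m u : ℝ) :
    (gaussianReal m v).real (Ici u) = 1 - Phi ((u - m) / √v) := by
  rw [← compl_Iio, probReal_compl_eq_one_sub measurableSet_Iio, gaussianReal_real_Iio hv]

lemma gaussianPDFReal_mul_exp (m θ x : ℝ) :
    gaussianPDFReal m v x * Real.exp (θ * x)
      = Real.exp (θ * m + v * θ ^ 2 / 2) * gaussianPDFReal (m + v * θ) v x := by
  rcases eq_or_ne v 0 with rfl | hv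
  · simp [gaussianPDFReal_zero_var]
  simp only [gaussianPDFReal]
  rw [mul_assoc, ← Real.exp_add, mul_left_comm, ← Real.exp_add]
  congr 2
  field_simp
  ring

lemma setIntegral_exp_mul_gaussianReal (hv : v ≠ 0) (m θ : ℝ) {s : Set ℝ} (hs : MeasurableSet s) :
    ∫ x in s, Real.exp (θ * x) ∂gaussianReal m v
      = Real.exp (θ * m + v * θ ^ 2 / 2) * (gaussianReal (m + v * θ) v).real s := by
  rw [← integral_indicator hs, integral_gaussianReal_eq_integral_smul hv]
  simp only [smul_eq_mul, ← indicator_mul_right, gaussianPDFReal_mul_exp]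
  rw [integral_indicator hs, integral_const_mul, measureReal_def,
    gaussianReal_apply_eq_integral _ hv, ENNReal.toReal_ofReal
      (setIntegral_nonneg hs fun x _ => gaussianPDFReal_nonneg _ _ x)]

lemma integral_ite_exp_gaussianReal (hv : v ≠ 0) (m u θ A B : ℝ) :
    ∫ w, (if u ≤ w then A * Real.exp (θ * w) else B) ∂gaussianReal m v
      = A * Real.exp (θ * m + v * θ ^ 2 / 2) * (1 - Phi ((u - (m + v * θ)) / √v))
        + B * Phi ((u - m) / √v) := by
  have h := integral_piecewise (μ := gaussianReal m v) (measurableSet_Ici (a := u))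
    ((integrable_exp_mul_gaussianReal θ).const_mul A).integrableOn
    (integrable_const B).integrableOn
  simp only [piecewise, mem_Ici] at h
  rw [h, integral_const_mul, setIntegral_exp_mul_gaussianReal hv _ _ measurableSet_Ici,
    gaussianReal_real_Ici hv, setIntegral_const, compl_Ici, gaussianReal_real_Iio hv,
    smul_eq_mul, mul_assoc, mul_comm B]

end Gaussian

section Xi

variable {γ r s t z k : ℝ}

noncomputable def dbar (γ r s t z x : ℝ) : ℝ :=
  (Real.log (z / x) - (r + γ ^ 2 / 2) * (s - t)) / (γ * √(s - t))

lemma PhiDbar_ofReal {x : ℝ} (hx : 0 < x) :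
    PhiDbar γ r s t z k (ENNReal.ofReal x) = Phi (dbar γ r s t z x + k * γ * √(s - t)) := by
  rw [PhiDbar, if_neg (ENNReal.ofReal_pos.2 hx).ne', if_neg ENNReal.ofReal_ne_top,
    ENNReal.toReal_ofReal hx.le, dbar]

lemma xi_zero_ofReal {x : ℝ} (hx : 0 < x) :
    xi γ r s t z k 0 (ENNReal.ofReal x)
      = z ^ k * Real.exp (-k * (r + γ ^ 2 / 2) * (s - t) + k ^ 2 * γ ^ 2 / 2 * (s - t)) *
        (1 - Phi (dbar γ r s t z x + k * γ * √(s - t))) := by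
  rw [xi, PhiDbar_ofReal hx, PhiDbar, if_pos rfl, if_pos (ENNReal.ofReal_pos.2 hx), mul_one]

lemma xi_ofReal_top {x : ℝ} (hx : 0 < x) :
    xi γ r s t z k (ENNReal.ofReal x) ⊤
      = z ^ k * Real.exp (-k * (r + γ ^ 2 / 2) * (s - t) + k ^ 2 * γ ^ 2 / 2 * (s - t)) *
        Phi (dbar γ r s t z x + k * γ * √(s - t)) := by
  rw [xi, PhiDbar_ofReal hx, PhiDbar, if_neg ENNReal.top_ne_zero, if_pos rfl,
    if_pos ENNReal.ofReal_lt_top, sub_zero, mul_one]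

end Xi

lemma max_rpow_one_div_eq_ite {q y c : ℝ} (hq : q < 0) (hy : 0 < y) (hc : 0 < c) :
    max (y ^ (1 / q)) c = if y ≤ c ^ q then y ^ (1 / q) else c := by
  have hcq : (c ^ q) ^ (1 / q) = c := by
    rw [← Real.rpow_mul hc.le, mul_one_div_cancel hq.ne, Real.rpow_one]
  have hiff : c ≤ y ^ (1 / q) ↔ y ≤ c ^ q := by
    rw [← hcq, Real.rpow_le_rpow_iff_of_neg (by positivity) hy (one_div_neg.2 hq), hcq]
  split_ifs with h
  · exact max_eq_left (hiff.2 h)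
  · exact max_eq_right (le_of_not_ge (mt hiff.1 h))

lemma mul_exp_sub_le_mul_iff {lam γ a α w : ℝ} (hlam : 0 < lam) (hγ : 0 < γ) (ha : 0 < a) :
    lam * Real.exp (α - γ * w) ≤ lam * a ↔ (Real.log (1 / a) + α) / γ ≤ w := by
  rw [mul_le_mul_iff_right₀ hlam, ← Real.le_log_iff_exp_le ha, div_le_iff₀ hγ, one_div,
    Real.log_inv]
  constructor <;> intro h <;> linarith

lemma optimal_consumption_rpow_eq_ite {p lam γ c α : ℝ} (hp : p < 1) (hlam : 0 < lam)
    (hγ : 0 < γ) (hc : 0 < c) (w : ℝ) :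
    (max ((lam * Real.exp (α - γ * w)) ^ (1 / (p - 1))) c) ^ p
      = if (Real.log (1 / (c ^ (p - 1) / lam)) + α) / γ ≤ w then
          lam ^ (p / (p - 1)) * Real.exp (p / (p - 1) * α) * Real.exp (-(p / (p - 1) * γ) * w)
        else c ^ p := by
  have hy : 0 < lam * Real.exp (α - γ * w) := by positivity
  have hiff := mul_exp_sub_le_mul_iff (α := α) (w := w) hlam hγ
    (show 0 < c ^ (p - 1) / lam by positivity)
  rw [mul_div_cancel₀ _ hlam.ne'] at hiff
  simp only [max_rpow_one_div_eq_ite (by linarith : p - 1 < 0) hy hc, hiff]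
  split_ifs
  · rw [← Real.rpow_mul hy.le, one_div_mul_eq_div, Real.mul_rpow hlam.le (Real.exp_pos _).le,
      ← Real.exp_mul, mul_assoc, ← Real.exp_add]
    congr 2
    ring
  · rfl

theorem expected_utility_optimal_consumption_general
    (t γ r p₁ lam c : ℝ)
    (ht : 0 < t) (hγ : 0 < γ) (hp : p₁ < 1)
    (hlam : 0 < lam) (hc : 0 < c) :
    (∫ w, (max ((lam * Real.exp (-(r + γ ^ 2 / 2) * t - γ * w)) ^ (1 / (p₁ - 1))) c) ^ p₁ / p₁
        ∂(gaussianReal 0 (Real.toNNReal t)))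
      = lam ^ (p₁ / (p₁ - 1)) / p₁ *
          xi γ r t 0 1 (p₁ / (p₁ - 1)) 0 (ENNReal.ofReal (c ^ (p₁ - 1) / lam))
        + c ^ p₁ / p₁ * xi γ r t 0 1 0 (ENNReal.ofReal (c ^ (p₁ - 1) / lam)) ⊤ := by
  have ha : 0 < c ^ (p₁ - 1) / lam := by positivity
  simp only [optimal_consumption_rpow_eq_ite hp hlam hγ hc]
  rw [integral_div, integral_ite_exp_gaussianReal (Real.toNNReal_pos.2 ht).ne',
    xi_zero_ofReal ha, xi_ofReal_top ha, Real.coe_toNNReal _ ht.le]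
  set k := p₁ / (p₁ - 1)
  set a := c ^ (p₁ - 1) / lam
  set u := (Real.log (1 / a) + -(r + γ ^ 2 / 2) * t) / γ
  have hd : u / √t = dbar γ r t 0 1 a := by
    rw [dbar, sub_zero, div_div]
    ring
  have hd_tilted : (u - (0 + t * -(k * γ))) / √t = dbar γ r t 0 1 a + k * γ * √(t - 0) := by
    rw [show u - (0 + t * -(k * γ)) = u + k * γ * t by ring, add_div, mul_div_assoc,
      Real.div_sqrt, hd, sub_zero]
  have hexp : lam ^ k * Real.exp (k * (-(r + γ ^ 2 / 2) * t))
        * Real.exp (-(k * γ) * 0 + t * (-(k * γ)) ^ 2 / 2)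
      = lam ^ k * Real.exp (-k * (r + γ ^ 2 / 2) * (t - 0) + k ^ 2 * γ ^ 2 / 2 * (t - 0)) := by
    rw [mul_assoc, ← Real.exp_add]
    congr 2
    ring
  rw [sub_zero, hd, hd_tilted, hexp]
  simp only [Real.one_rpow, neg_zero, zero_mul, zero_pow two_ne_zero, add_zero, Real.exp_zero,
    one_mul, zero_div]
  ring

theorem expected_utility_optimal_consumption
    (t γ r p₁ lam c : ℝ)
    (ht : 0 < t) (hγ : 0 < γ) (hr : 0 < r) (hp : p₁ < 1) (hp0 : p₁ ≠ 0)
    (hlam : 0 < lam) (hc : 0 < c) :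
    (∫ w, (max ((lam * Real.exp (-(r + γ ^ 2 / 2) * t - γ * w)) ^ (1 / (p₁ - 1))) c) ^ p₁ / p₁
        ∂(gaussianReal 0 (Real.toNNReal t)))
      = lam ^ (p₁ / (p₁ - 1)) / p₁ *
          xi γ r t 0 1 (p₁ / (p₁ - 1)) 0 (ENNReal.ofReal (c ^ (p₁ - 1) / lam))
        + c ^ p₁ / p₁ * xi γ r t 0 1 0 (ENNReal.ofReal (c ^ (p₁ - 1) / lam)) ⊤ :=
  expected_utility_optimal_consumption_general t γ r p₁ lam c ht hγ hp hlam hc
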